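/- Let L ⊆ Red(X) be a regular language of reduced words, |X| ≥ 2. Then D(L | Red(X)) = 0 if and only if there exists a reduced word w such that w occurs as a factor of no word of L. -/

import Mathlib

open Filter Topology

def FreelyReduced {X : Type*} (w : List (X × Bool)) : Prop :=
  List.Chain' (fun a b => a.1 = b.1 → a.2 = b.2) w

def Red (X : Type*) : Set (List (X × Bool)) := {w | FreelyReduced w}

noncomputable def sphereCount {A : Type*} (L : Set (List A)) (n : ℕ) : ℕ :=
  Nat.card {w : List A // w ∈ L ∧ w.length = n}

noncomputable def relRatio {A : Type*} (L M : Set (List A)) (n : ℕ) : ℝ :=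
  (sphereCount L n : ℝ) / (sphereCount M n : ℝ)

def RegularLang {A : Type*} (L : Set (List A)) : Prop :=
  ∃ (σ : Type) (_ : Fintype σ) (M : DFA A σ), M.accepts = L


/-!
Avoiding a reduced factor `w` costs a fixed proportion per block of length `|w| + 1`: whatever
letter precedes the block, at least one of its `(2|X| - 1) ^ (|w| + 1)` reduced continuations,
namely `x :: w` for a letter `x` cancelling neither neighbour (this is where `|X| ≥ 2` enters),
is excluded. So the relative density of `L` decays exponentially.

Conversely, run a DFA for `L` that also remembers the last letter read. If some pair
(state, last letter) reachable by a reduced word is such that every reduced continuation can still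
be completed to a word of `L`, then by pumping these completions have bounded length `K`, so the
`(2|X| - 1) ^ n` continuations of length `n` inject into the words of `L` with length in a window
of width `K`, and the densities on that window cannot all be small. Otherwise every reachable pair
can be driven into a dead end by a reduced word; concatenating such words for the finitely many
pairs gives a reduced word that is a factor of no word of `L`.
-/

open Finset

section LastLetter

variable {α : Type*}

def lastLetter (o : Option α) (w : List α) : Option α :=
  w.getLast?.or o

@[simp] lemma lastLetter_nil (o : Option α) : lastLetter o [] = o := rfl

lemma lastLetter_cons (o : Option α) (b : α) (t : List α) :
    lastLetter o (b :: t) = lastLetter (some b) t := by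
  simp only [lastLetter, List.getLast?_cons]
  cases t.getLast? <;> rfl

lemma lastLetter_of_ne_nil (o : Option α) {w : List α} (hw : w ≠ []) :
    lastLetter o w = some (w.getLast hw) := by
  simp [lastLetter, List.getLast?_eq_some_getLast hw]

lemma lastLetter_append (o : Option α) (y z : List α) :
    lastLetter o (y ++ z) = lastLetter (lastLetter o y) z := by
  simp [lastLetter, List.getLast?_append, Option.or_assoc]

end LastLetter

section ReducedWords

variable {X : Type*}

def ReducedAfter (o : Option (X × Bool)) (w : List (X × Bool)) : Prop :=
  FreelyReduced (o.toList ++ w)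

def NonCancelling (a b : X × Bool) : Prop :=
  a.1 = b.1 → a.2 = b.2

lemma freelyReduced_iff_isChain {w : List (X × Bool)} :
    FreelyReduced w ↔ w.IsChain NonCancelling :=
  Iff.rfl

@[simp] lemma reducedAfter_none {w : List (X × Bool)} : ReducedAfter none w ↔ FreelyReduced w :=
  Iff.rfl

@[simp] lemma reducedAfter_nil (o : Option (X × Bool)) : ReducedAfter o [] := by
  cases o <;> simp [ReducedAfter, freelyReduced_iff_isChain]

lemma reducedAfter_cons {o : Option (X × Bool)} {b : X × Bool} {t : List (X × Bool)} :
    ReducedAfter o (b :: t) ↔ (∀ a ∈ o, NonCancelling a b) ∧ ReducedAfter (some b) t := by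
  cases o <;> simp [ReducedAfter, freelyReduced_iff_isChain, List.isChain_cons_cons]

lemma ReducedAfter.to_none {o : Option (X × Bool)} {w : List (X × Bool)}
    (h : ReducedAfter o w) : FreelyReduced w :=
  List.IsChain.right_of_append h

lemma nonCancelling_iff_ne {a b : X × Bool} : NonCancelling a b ↔ b ≠ (a.1, !a.2) := by
  obtain ⟨x, s⟩ := a
  obtain ⟨y, t⟩ := b
  cases s <;> cases t <;> simp [NonCancelling, eq_comm]

lemma nonCancelling_comm {a b : X × Bool} : NonCancelling a b ↔ NonCancelling b a :=
  ⟨fun h h' => (h h'.symm).symm, fun h h' => (h h'.symm).symm⟩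

lemma reducedAfter_append {o : Option (X × Bool)} {y z : List (X × Bool)} :
    ReducedAfter o (y ++ z) ↔ ReducedAfter o y ∧ ReducedAfter (lastLetter o y) z := by
  induction y generalizing o with
  | nil => simp
  | cons b t ih => simp [reducedAfter_cons, ih, lastLetter_cons, and_assoc]

lemma ReducedAfter.lastLetter_none {o : Option (X × Bool)} {v y : List (X × Bool)}
    (h : ReducedAfter (lastLetter o v) y) : ReducedAfter (lastLetter none v) y := by
  rcases eq_or_ne v [] with rfl | hv
  · exact h.to_none
  · rwa [lastLetter_of_ne_nil _ hv] at h ⊢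

end ReducedWords

section Counting

open scoped Classical

variable {X : Type*} [Fintype X]

lemma card_biUnion_image_cons {α : Type*} [DecidableEq α] (s : Finset α)
    (t : α → Finset (List α)) :
    (s.biUnion fun b => (t b).image (b :: ·)).card = ∑ b ∈ s, (t b).card := by
  rw [card_biUnion]
  · exact sum_congr rfl fun b _ => card_image_of_injective _ List.cons_injective
  · intro b _ c _ hbc
    simp only [Function.onFun, disjoint_left, mem_image]
    rintro _ ⟨_, -, rfl⟩ ⟨_, -, huv⟩
    exact hbc (List.cons_eq_cons.mp huv).1.symm

noncomputable def reducedWords (o : Option (X × Bool)) : ℕ → Finset (List (X × Bool))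
  | 0 => {[]}
  | n + 1 => (univ.filter fun b => ∀ a ∈ o, NonCancelling a b).biUnion
      fun b => (reducedWords (some b) n).image (b :: ·)

lemma mem_reducedWords {o : Option (X × Bool)} {n : ℕ} {v : List (X × Bool)} :
    v ∈ reducedWords o n ↔ ReducedAfter o v ∧ v.length = n := by
  induction n generalizing o v with
  | zero =>
    simp only [reducedWords, mem_singleton, List.length_eq_zero_iff, iff_and_self]
    rintro rfl
    exact reducedAfter_nil o
  | succ n ih =>
    cases v with
    | nil => simp [reducedWords]
    | cons b t =>
      simp only [reducedWords, mem_biUnion, mem_filter, mem_univ, true_and, mem_image, ih,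
        reducedAfter_cons, List.cons.injEq, List.length_cons, Nat.add_right_cancel_iff]
      constructor
      · rintro ⟨c, hc, u, ⟨hu, hlen⟩, rfl, rfl⟩
        exact ⟨⟨hc, hu⟩, hlen⟩
      · rintro ⟨⟨hb, ht⟩, hlen⟩
        exact ⟨b, hb, t, ⟨ht, hlen⟩, rfl, rfl⟩

lemma card_reducedWords_some (a : X × Bool) (n : ℕ) :
    (reducedWords (some a) n).card = (Fintype.card (X × Bool) - 1) ^ n := by
  induction n generalizing a with
  | zero => rfl
  | succ n ih =>
    have hfollow : (univ.filter fun b => ∀ c ∈ some a, NonCancelling c b) =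
        univ.erase (a.1, !a.2) := by
      ext b
      simp [nonCancelling_iff_ne]
    rw [reducedWords, card_biUnion_image_cons, hfollow]
    simp [ih, pow_succ']

lemma card_reducedWords_none_succ (n : ℕ) :
    (reducedWords (X := X) none (n + 1)).card =
      Fintype.card (X × Bool) * (Fintype.card (X × Bool) - 1) ^ n := by
  simp [reducedWords, card_biUnion_image_cons, card_reducedWords_some]

lemma pow_le_card_reducedWords (o : Option (X × Bool)) (n : ℕ) :
    (Fintype.card (X × Bool) - 1) ^ n ≤ (reducedWords o n).card := by
  cases o with
  | some a => exact (card_reducedWords_some a n).ge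
  | none =>
    cases n with
    | zero => simp [reducedWords]
    | succ n =>
      rw [card_reducedWords_none_succ, pow_succ']
      exact Nat.mul_le_mul_right _ (Nat.sub_le _ _)

lemma card_reducedWords_none_le [Nonempty X] (n : ℕ) :
    (reducedWords (X := X) none n).card ≤ 2 * (Fintype.card (X × Bool) - 1) ^ n := by
  cases n with
  | zero => simp [reducedWords]
  | succ n =>
    have : 2 ≤ Fintype.card (X × Bool) := by
      rw [Fintype.card_prod, Fintype.card_bool]
      have := Fintype.card_pos (α := X)
      omega
    rw [card_reducedWords_none_succ, pow_succ', ← mul_assoc]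
    exact Nat.mul_le_mul_right _ (by omega)

end Counting

section SphereCount

variable {α : Type*}

lemma sphereCount_eq_ncard (L : Set (List α)) (n : ℕ) :
    sphereCount L n = {u | u ∈ L ∧ u.length = n}.ncard :=
  Nat.card_coe_set_eq _

lemma sphereCount_le_card {L : Set (List α)} {n : ℕ} {F : Finset (List α)}
    (h : ∀ u ∈ L, u.length = n → u ∈ F) : sphereCount L n ≤ F.card := by
  rw [sphereCount_eq_ncard, ← Set.ncard_coe_finset]
  exact Set.ncard_le_ncard (fun u hu => h u hu.1 hu.2) F.finite_toSet

lemma card_le_sphereCount [Finite α] {L : Set (List α)} {n : ℕ} {F : Finset (List α)}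
    (h : ∀ u ∈ F, u ∈ L ∧ u.length = n) : F.card ≤ sphereCount L n := by
  rw [sphereCount_eq_ncard, ← Set.ncard_coe_finset]
  exact Set.ncard_le_ncard h ((List.finite_length_eq α n).subset fun u hu => hu.2)

lemma card_le_sum_sphereCount [Finite α] {L : Set (List α)} {S : Finset (List α)} {x : List α}
    {n K : ℕ} (hS : ∀ v ∈ S, v.length = n)
    (hext : ∀ v ∈ S, ∃ y : List α, y.length < K ∧ x ++ v ++ y ∈ L) :
    S.card ≤ ∑ j ∈ range K, sphereCount L (x.length + n + j) := by
  classical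
  let T : ℕ → Finset (List α) := fun m => (List.finite_length_eq α m).toFinset.filter (· ∈ L)
  calc S.card ≤ ((range K).biUnion fun j => T (x.length + n + j)).card := by
        refine card_le_card_of_surjOn (fun u => (u.drop x.length).take n) fun v hv => ?_
        obtain ⟨y, hy, hmem⟩ := hext v hv
        refine ⟨x ++ v ++ y, mem_biUnion.mpr ⟨y.length, mem_range.mpr hy, ?_⟩, ?_⟩
        · simp only [T, mem_filter, Set.Finite.mem_toFinset, Set.mem_ofPred_eq, List.length_append,
            hS v hv, true_and]
          exact hmem
        · simp [hS v hv]
    _ ≤ ∑ j ∈ range K, (T (x.length + n + j)).card := card_biUnion_le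
    _ ≤ _ := sum_le_sum fun j _ => card_le_sphereCount fun u hu => by simpa [T, and_comm] using hu

lemma relRatio_nonneg (L M : Set (List α)) (n : ℕ) : 0 ≤ relRatio L M n :=
  div_nonneg (Nat.cast_nonneg _) (Nat.cast_nonneg _)

lemma sphereCount_red {X : Type*} [Fintype X] (n : ℕ) :
    sphereCount (Red X) n = (reducedWords (X := X) none n).card :=
  le_antisymm (sphereCount_le_card fun _ hu hlen => mem_reducedWords.mpr ⟨hu, hlen⟩)
    (card_le_sphereCount fun _ hu => mem_reducedWords.mp hu)

end SphereCount

section Avoiding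

open scoped Classical

variable {X : Type*} [Fintype X]

noncomputable def avoiding (w : List (X × Bool)) (o : Option (X × Bool)) (n : ℕ) :
    Finset (List (X × Bool)) :=
  (reducedWords o n).filter fun v => ¬ w <:+: v

lemma mem_avoiding {w : List (X × Bool)} {o : Option (X × Bool)} {n : ℕ} {v : List (X × Bool)} :
    v ∈ avoiding w o n ↔ ReducedAfter o v ∧ v.length = n ∧ ¬ w <:+: v := by
  simp [avoiding, mem_reducedWords, and_assoc]

lemma avoiding_subset (w : List (X × Bool)) (o : Option (X × Bool)) (n : ℕ) :
    avoiding w o n ⊆ reducedWords o n :=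
  filter_subset _ _

lemma card_avoiding_add_le {w : List (X × Bool)} {o : Option (X × Bool)} {m n C : ℕ}
    (hm : m ≠ 0) (hC : ∀ a, (avoiding w (some a) n).card ≤ C) :
    (avoiding w o (m + n)).card ≤ (avoiding w o m).card * C := by
  have hsub : avoiding w o (m + n) ⊆ (avoiding w o m).biUnion
      fun z => (avoiding w (lastLetter o z) n).image (z ++ ·) := by
    intro v hv
    obtain ⟨hred, hlen, hfree⟩ := mem_avoiding.mp hv
    rw [← List.take_append_drop m v, reducedAfter_append] at hred
    refine mem_biUnion.mpr ⟨v.take m, ?_, mem_image.mpr ⟨v.drop m, ?_, List.take_append_drop m v⟩⟩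
    · exact mem_avoiding.mpr ⟨hred.1, by simp [hlen],
        fun h => hfree (h.trans (List.take_prefix m v).isInfix)⟩
    · exact mem_avoiding.mpr ⟨hred.2, by simp [hlen],
        fun h => hfree (h.trans (List.drop_suffix m v).isInfix)⟩
  refine (card_le_card hsub).trans
    (card_biUnion_le_card_mul _ _ _ fun z hz => card_image_le.trans ?_)
  have hz : z ≠ [] := by
    rintro rfl
    exact hm (mem_avoiding.mp hz).2.1.symm
  rw [lastLetter_of_ne_nil o hz]
  exact hC _

lemma exists_nonCancelling_between (hX : 2 ≤ Fintype.card X) (a b : X × Bool) :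
    ∃ x : X × Bool, NonCancelling a x ∧ NonCancelling x b := by
  have hcard : ({(a.1, !a.2), (b.1, !b.2)} : Finset (X × Bool)).card <
      (univ : Finset (X × Bool)).card :=
    card_le_two.trans_lt (by rw [card_univ, Fintype.card_prod, Fintype.card_bool]; omega)
  obtain ⟨x, -, hx⟩ := exists_mem_notMem_of_card_lt_card hcard
  simp only [mem_insert, mem_singleton, not_or] at hx
  exact ⟨x, nonCancelling_iff_ne.mpr hx.1, nonCancelling_comm.mpr (nonCancelling_iff_ne.mpr hx.2)⟩

lemma card_avoiding_lt (hX : 2 ≤ Fintype.card X) {w : List (X × Bool)} (hw : FreelyReduced w)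
    (a : X × Bool) :
    (avoiding w (some a) (w.length + 1)).card < (Fintype.card (X × Bool) - 1) ^ (w.length + 1) := by
  obtain ⟨x, hax, hxw⟩ := exists_nonCancelling_between hX a (w.headD a)
  have hmem : x :: w ∈ reducedWords (some a) (w.length + 1) := by
    refine mem_reducedWords.mpr ⟨reducedAfter_cons.mpr ⟨by simpa using hax, ?_⟩, rfl⟩
    cases w with
    | nil => exact reducedAfter_nil _
    | cons b t => exact reducedAfter_cons.mpr ⟨by simpa using hxw, hw⟩
  rw [← card_reducedWords_some a]
  exact card_lt_card (filter_ssubset.mpr ⟨x :: w, hmem, not_not.mpr (List.suffix_cons x w).isInfix⟩)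

end Avoiding

section ForbiddenFactor

variable {X : Type*} [Fintype X]

lemma card_avoiding_mul_add_le (hX : 2 ≤ Fintype.card X) {w : List (X × Bool)}
    (hw : FreelyReduced w) (a : X × Bool) (q s : ℕ) :
    (avoiding w (some a) (q * (w.length + 1) + s)).card ≤
      ((Fintype.card (X × Bool) - 1) ^ (w.length + 1) - 1) ^ q *
        (Fintype.card (X × Bool) - 1) ^ s := by
  induction q generalizing a with
  | zero =>
    rw [zero_mul, zero_add, pow_zero, one_mul, ← card_reducedWords_some a s]
    exact card_le_card (avoiding_subset w _ s)
  | succ q ih =>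
    rw [add_mul, one_mul, add_comm (q * _), add_assoc, pow_succ', mul_assoc]
    exact (card_avoiding_add_le (Nat.succ_ne_zero _) ih).trans
      (Nat.mul_le_mul_right _ (Nat.le_sub_one_of_lt (card_avoiding_lt hX hw a)))

lemma sphereCount_succ_le (hX : 2 ≤ Fintype.card X) {L : Set (List (X × Bool))} (hL : L ⊆ Red X)
    {w : List (X × Bool)} (hw : FreelyReduced w) (hforb : ∀ u ∈ L, ¬ w <:+: u) (t : ℕ) :
    sphereCount L (t + 1) ≤ Fintype.card (X × Bool) *
      (((Fintype.card (X × Bool) - 1) ^ (w.length + 1) - 1) ^ (t / (w.length + 1)) *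
        (Fintype.card (X × Bool) - 1) ^ (t % (w.length + 1))) := by
  have hfirst : (avoiding w none 1).card ≤ Fintype.card (X × Bool) := by
    simpa [card_reducedWords_none_succ] using card_le_card (avoiding_subset w none 1)
  calc sphereCount L (t + 1)
      ≤ (avoiding w none (1 + t)).card :=
        sphereCount_le_card fun u hu hlen => mem_avoiding.mpr ⟨hL hu, by omega, hforb u hu⟩
    _ ≤ _ := by
        refine (card_avoiding_add_le one_ne_zero fun a => ?_).trans (Nat.mul_le_mul_right _ hfirst)
        conv_lhs => rw [← Nat.div_add_mod' t (w.length + 1)]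
        exact card_avoiding_mul_add_le hX hw a _ _

theorem tendsto_relRatio_zero_of_forall_not_infix (hX : 2 ≤ Fintype.card X)
    {L : Set (List (X × Bool))} (hL : L ⊆ Red X) {w : List (X × Bool)} (hw : FreelyReduced w)
    (hforb : ∀ u ∈ L, ¬ w <:+: u) : Tendsto (relRatio L (Red X)) atTop (𝓝 0) := by
  set N := Fintype.card (X × Bool) - 1
  set B := w.length + 1
  set ρ : ℝ := ((N ^ B - 1 : ℕ) : ℝ) / (N : ℝ) ^ B
  have hcard : 3 ≤ Fintype.card (X × Bool) := by
    rw [Fintype.card_prod, Fintype.card_bool]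
    omega
  have hN : 0 < N := by omega
  have hρ : ρ < 1 := by
    rw [div_lt_one (by positivity)]
    exact_mod_cast Nat.sub_lt (by positivity) one_pos
  have hbound : ∀ t, relRatio L (Red X) (t + 1) ≤ ρ ^ (t / B) := by
    intro t
    have hden : (sphereCount (Red X) (t + 1) : ℝ) = Fintype.card (X × Bool) * (N : ℝ) ^ t := by
      rw [sphereCount_red, card_reducedWords_none_succ]
      push_cast
      ring
    have hsplit : (N : ℝ) ^ t = ((N : ℝ) ^ B) ^ (t / B) * (N : ℝ) ^ (t % B) := by
      rw [← pow_mul, ← pow_add, Nat.div_add_mod]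
    rw [relRatio, hden, div_le_iff₀ (mul_pos (by positivity) (by positivity))]
    calc (sphereCount L (t + 1) : ℝ)
        ≤ ((Fintype.card (X × Bool) * ((N ^ B - 1) ^ (t / B) * N ^ (t % B)) : ℕ) : ℝ) := by
          exact_mod_cast sphereCount_succ_le hX hL hw hforb t
      _ = ρ ^ (t / B) * (Fintype.card (X × Bool) * (N : ℝ) ^ t) := by
          rw [hsplit, div_pow]
          field_simp
          push_cast
          ring
  rw [← tendsto_add_atTop_iff_nat 1]
  refine squeeze_zero (fun n => relRatio_nonneg _ _ _) hbound ?_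
  exact (tendsto_pow_atTop_nhds_zero_of_lt_one (by positivity) hρ).comp
    (Nat.tendsto_div_const_atTop w.length.succ_ne_zero)

end ForbiddenFactor

section PairAutomaton

variable {α σ : Type*}

def DFA.withLast (M : DFA α σ) : DFA α (σ × Option α) where
  step p a := (M.step p.1 a, some a)
  start := (M.start, none)
  accept := Prod.fst ⁻¹' M.accept

@[simp] lemma DFA.withLast_start (M : DFA α σ) : M.withLast.start = (M.start, none) :=
  rfl

@[simp] lemma DFA.mem_withLast_accept {M : DFA α σ} {p : σ × Option α} :
    p ∈ M.withLast.accept ↔ p.1 ∈ M.accept :=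
  Iff.rfl

@[simp] lemma DFA.withLast_evalFrom (M : DFA α σ) (p : σ × Option α) (y : List α) :
    M.withLast.evalFrom p y = (M.evalFrom p.1 y, lastLetter p.2 y) := by
  induction y generalizing p with
  | nil => rfl
  | cons a y ih => simp only [DFA.evalFrom_cons, ih, lastLetter_cons]; rfl

end PairAutomaton

section ReducedRuns

variable {X σ : Type*} (M : DFA (X × Bool) σ)

def Alive (p : σ × Option (X × Bool)) : Prop :=
  ∃ y ∈ M.withLast.acceptsFrom p, ReducedAfter p.2 y

def Reachable (p : σ × Option (X × Bool)) : Prop :=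
  ∃ x, FreelyReduced x ∧ M.withLast.eval x = p

variable {M}

lemma Alive.of_evalFrom {p : σ × Option (X × Bool)} {y : List (X × Bool)}
    (hy : ReducedAfter p.2 y) (h : Alive M (M.withLast.evalFrom p y)) : Alive M p := by
  obtain ⟨z, hz, hred⟩ := h
  rw [DFA.withLast_evalFrom] at hred
  refine ⟨y ++ z, ?_, reducedAfter_append.mpr ⟨hy, hred⟩⟩
  rwa [DFA.mem_acceptsFrom, DFA.evalFrom_of_append]

lemma Reachable.evalFrom {p : σ × Option (X × Bool)} (hp : Reachable M p)
    {y : List (X × Bool)} (hy : ReducedAfter p.2 y) : Reachable M (M.withLast.evalFrom p y) := by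
  obtain ⟨x, hx, rfl⟩ := hp
  refine ⟨x ++ y, reducedAfter_none.mp (reducedAfter_append.mpr ⟨hx, ?_⟩),
    DFA.evalFrom_of_append _ _ _ _⟩
  simpa [DFA.eval] using hy

lemma Alive.exists_length_lt [Fintype σ] [Fintype X] {p : σ × Option (X × Bool)}
    (h : Alive M p) : ∃ y ∈ M.withLast.acceptsFrom p,
      ReducedAfter p.2 y ∧ y.length < Fintype.card (σ × Option (X × Bool)) := by
  classical
  have hex : ∃ n, ∃ y ∈ M.withLast.acceptsFrom p, ReducedAfter p.2 y ∧ y.length = n := by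
    obtain ⟨y, hy, hred⟩ := h
    exact ⟨_, y, hy, hred, rfl⟩
  obtain ⟨y, hacc, hred, hlen⟩ := Nat.find_spec hex
  refine ⟨y, hacc, hred, lt_of_not_ge fun hlong => ?_⟩
  obtain ⟨q, a, b, c, rfl, -, hb, ha, hloop, hc⟩ := M.withLast.evalFrom_split hlong rfl
  have hlast : lastLetter p.2 (a ++ b) = lastLetter p.2 a := by
    rw [lastLetter_append]
    simp only [DFA.withLast_evalFrom] at ha hloop
    rw [← ha] at hloop
    exact congrArg Prod.snd hloop
  rw [reducedAfter_append, reducedAfter_append, hlast] at hred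
  refine Nat.find_min hex (m := (a ++ c).length) ?_ ⟨a ++ c, ?_, reducedAfter_append.mpr
    ⟨hred.1.1, hred.2⟩, rfl⟩
  · have := List.length_pos_of_ne_nil hb
    simp only [← hlen, List.length_append]
    omega
  · rwa [DFA.mem_acceptsFrom, DFA.evalFrom_of_append, ha, hc]

end ReducedRuns

section DenseCase

variable {X σ : Type*} [Fintype X] [Fintype σ] {M : DFA (X × Bool) σ}

theorem not_tendsto_relRatio_zero_of_forall_alive [Nonempty X] {p : σ × Option (X × Bool)}
    (hp : Reachable M p) (halive : ∀ y, ReducedAfter p.2 y → Alive M (M.withLast.evalFrom p y)) :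
    ¬ Tendsto (relRatio M.accepts (Red X)) atTop (𝓝 0) := by
  intro htend
  obtain ⟨x, -, rfl⟩ := hp
  set N := Fintype.card (X × Bool) - 1
  set K := Fintype.card (σ × Option (X × Bool))
  set r := relRatio M.accepts (Red X)
  have hN : 0 < N := by
    have := Fintype.card_pos (α := X)
    simp only [N, Fintype.card_prod, Fintype.card_bool]
    omega
  have hcount : ∀ n, N ^ n ≤ ∑ j ∈ range K, sphereCount M.accepts (x.length + n + j) := by
    refine fun n => (pow_le_card_reducedWords (M.withLast.eval x).2 n).trans
      (card_le_sum_sphereCount (fun v hv => (mem_reducedWords.mp hv).2) fun v hv => ?_)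
    obtain ⟨y, hacc, -, hlen⟩ := (halive v (mem_reducedWords.mp hv).1).exists_length_lt
    refine ⟨y, hlen, ?_⟩
    simp only [DFA.mem_acceptsFrom, DFA.withLast_evalFrom, DFA.mem_withLast_accept, DFA.eval,
      DFA.withLast_start] at hacc
    show M.evalFrom M.start (x ++ v ++ y) ∈ M.accept
    rwa [DFA.evalFrom_of_append, DFA.evalFrom_of_append]
  have hsphere : ∀ m, (sphereCount M.accepts m : ℝ) ≤ 2 * N ^ m * r m := by
    intro m
    have hred : 0 < sphereCount (Red X) m := (pow_pos hN m).trans_le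
      ((pow_le_card_reducedWords none m).trans_eq (sphereCount_red m).symm)
    have hred' : sphereCount (Red X) m ≤ 2 * N ^ m :=
      (sphereCount_red m).trans_le (card_reducedWords_none_le m)
    calc (sphereCount M.accepts m : ℝ) = sphereCount (Red X) m * r m := by
          simp only [r, relRatio]
          rw [mul_div_cancel₀ _ (by exact_mod_cast hred.ne')]
      _ ≤ 2 * N ^ m * r m :=
          mul_le_mul_of_nonneg_right (by exact_mod_cast hred') (relRatio_nonneg _ _ _)
  have hlower : ∀ n, 1 ≤ (N : ℝ) ^ (x.length + K) * ∑ j ∈ range K, 2 * r (x.length + n + j) := by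
    intro n
    refine le_of_mul_le_mul_left ?_ (by positivity : (0 : ℝ) < N ^ n)
    calc (N : ℝ) ^ n * 1 ≤ ∑ j ∈ range K, (sphereCount M.accepts (x.length + n + j) : ℝ) := by
          exact_mod_cast (mul_one (N ^ n)).trans_le (hcount n)
      _ ≤ ∑ j ∈ range K, N ^ n * (N ^ (x.length + K) * (2 * r (x.length + n + j))) := by
          refine sum_le_sum fun j hj => (hsphere _).trans ?_
          rw [← mul_assoc, ← pow_add, mul_comm 2, mul_assoc]
          refine mul_le_mul_of_nonneg_right (pow_le_pow_right₀ (by exact_mod_cast hN) ?_)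
            (mul_nonneg zero_le_two (relRatio_nonneg _ _ _))
          have := mem_range.mp hj
          omega
      _ = _ := by rw [mul_sum, mul_sum]
  have hzero : Tendsto (fun n => (N : ℝ) ^ (x.length + K) *
      ∑ j ∈ range K, 2 * r (x.length + n + j)) atTop (𝓝 0) := by
    simpa using (tendsto_finsetSum (range K) fun j _ => (htend.comp
      (tendsto_atTop_mono (fun n => show n ≤ x.length + n + j by omega) tendsto_id)).const_mul 2
      ).const_mul _
  exact absurd (ge_of_tendsto' hzero hlower) (by norm_num)

end DenseCase

section SparseCase

variable {X σ : Type*} {M : DFA (X × Bool) σ}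

def DeadAfter (M : DFA (X × Bool) σ) (p : σ × Option (X × Bool)) (v : List (X × Bool)) : Prop :=
  ReducedAfter p.2 v → ¬ Alive M (M.withLast.evalFrom p v)

lemma DeadAfter.append {p : σ × Option (X × Bool)} {v : List (X × Bool)} (h : DeadAfter M p v)
    (w : List (X × Bool)) : DeadAfter M p (v ++ w) := by
  intro hvw halive
  rw [reducedAfter_append] at hvw
  refine h hvw.1 (Alive.of_evalFrom (y := w) ?_ ?_)
  · simpa using hvw.2
  · rwa [← DFA.evalFrom_of_append]

lemma Reachable.exists_deadAfter_append
    (hkill : ∀ p, Reachable M p → ∃ y, ReducedAfter p.2 y ∧ ¬ Alive M (M.withLast.evalFrom p y))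
    {p : σ × Option (X × Bool)} (hp : Reachable M p) {v : List (X × Bool)}
    (hv : FreelyReduced v) : ∃ w, FreelyReduced (v ++ w) ∧ DeadAfter M p (v ++ w) := by
  by_cases hpv : ReducedAfter p.2 v
  · obtain ⟨y, hy, hdead⟩ := hkill _ (hp.evalFrom hpv)
    rw [DFA.withLast_evalFrom] at hy
    refine ⟨y, reducedAfter_none.mp (reducedAfter_append.mpr ⟨hv, hy.lastLetter_none⟩),
      fun _ => ?_⟩
    rwa [DFA.evalFrom_of_append]
  · refine ⟨[], by rwa [List.append_nil], fun h => absurd ?_ hpv⟩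
    rwa [List.append_nil] at h

lemma exists_forall_deadAfter [Fintype σ] [Fintype X]
    (hkill : ∀ p, Reachable M p → ∃ y, ReducedAfter p.2 y ∧ ¬ Alive M (M.withLast.evalFrom p y)) :
    ∃ v, FreelyReduced v ∧ ∀ p, Reachable M p → DeadAfter M p v := by
  classical
  suffices ∀ s : Finset (σ × Option (X × Bool)),
      ∃ v, FreelyReduced v ∧ ∀ p ∈ s, Reachable M p → DeadAfter M p v by
    obtain ⟨v, hv, hdead⟩ := this univ
    exact ⟨v, hv, fun p => hdead p (mem_univ p)⟩
  intro s
  induction s using Finset.induction_on with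
  | empty => exact ⟨[], reducedAfter_nil none, by simp⟩
  | insert p s _ ih =>
    obtain ⟨v, hv, hdead⟩ := ih
    simp only [mem_insert, forall_eq_or_imp]
    by_cases hp : Reachable M p
    · obtain ⟨w, hvw, hpw⟩ := hp.exists_deadAfter_append hkill hv
      exact ⟨v ++ w, hvw, fun _ => hpw, fun q hq hq' => (hdead q hq hq').append w⟩
    · exact ⟨v, hv, fun h => absurd h hp, hdead⟩

theorem exists_forall_not_infix_of_forall_reachable_not_alive [Fintype σ] [Fintype X]
    (hkill : ∀ p, Reachable M p → ∃ y, ReducedAfter p.2 y ∧ ¬ Alive M (M.withLast.evalFrom p y)) :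
    ∃ w, FreelyReduced w ∧ ∀ u ∈ M.accepts, FreelyReduced u → ¬ w <:+: u := by
  obtain ⟨v, hv, hdead⟩ := exists_forall_deadAfter hkill
  refine ⟨v, hv, ?_⟩
  rintro _ hacc hred ⟨s, t, rfl⟩
  rw [← reducedAfter_none, List.append_assoc, reducedAfter_append] at hred
  have hst : ReducedAfter (M.withLast.eval s).2 (v ++ t) := by simpa [DFA.eval] using hred.2
  rw [reducedAfter_append] at hst
  refine hdead _ ⟨s, hred.1, rfl⟩ hst.1 ⟨t, ?_, by simpa using hst.2⟩
  rw [DFA.mem_accepts, DFA.eval, DFA.evalFrom_of_append, DFA.evalFrom_of_append] at hacc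
  simpa [DFA.mem_acceptsFrom, DFA.eval] using hacc

end SparseCase

/-- Sin'ya-type theorem for reduced words: for regular `L ⊆ Red(X)`,
`D(L | Red(X)) = 0` iff some reduced word occurs as a factor of no word of `L`. -/
theorem stmt13 {X : Type*} [Fintype X] (hX : 2 ≤ Fintype.card X)
    (L : Set (List (X × Bool))) (hL : L ⊆ Red X) (hreg : RegularLang L) :
    Filter.Tendsto (relRatio L (Red X)) Filter.atTop (nhds 0) ↔
      ∃ w : List (X × Bool), FreelyReduced w ∧ ∀ u ∈ L, ¬ w <:+: u := by
  refine ⟨fun htend => ?_, fun ⟨w, hw, hforb⟩ =>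
    tendsto_relRatio_zero_of_forall_not_infix hX hL hw hforb⟩
  obtain ⟨σ, _, M, rfl⟩ := hreg
  have : Nonempty X := Fintype.card_pos_iff.mp (by omega)
  by_cases hdense :
      ∃ p, Reachable M p ∧ ∀ y, ReducedAfter p.2 y → Alive M (M.withLast.evalFrom p y)
  · obtain ⟨p, hp, halive⟩ := hdense
    exact absurd htend (not_tendsto_relRatio_zero_of_forall_alive hp halive)
  · push Not at hdense
    obtain ⟨w, hw, hforb⟩ := exists_forall_not_infix_of_forall_reachable_not_alive hdense
    exact ⟨w, hw, fun u hu => hforb u hu (hL hu)⟩
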